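/- For every k ∈ ℕ, the KKT residual r(x^k) := ‖x^k − prox_g(x^k − ∇f(x^k))‖ satisfies r(x^k) ≤ (2 + ‖𝒢_k‖)(1 + √2 · μ̲^{−1/2} √ε_k) ‖d^k‖. -/

import Mathlib

open Set Filter Topology
open scoped RealInnerProductSpace ENNReal

noncomputable section

attribute [local instance] Classical.propDecidable

variable {X : Type*} [NormedAddCommGroup X] [InnerProductSpace ℝ X] [FiniteDimensional ℝ X]

/-- `g` extended by `+∞` outside its domain `s`. -/
def extE (g : X → ℝ) (s : Set X) (x : X) : EReal := if x ∈ s then (g x : EReal) else ⊤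

/-- The objective `F = f + g`, extended-real valued. -/
def FE (f g : X → ℝ) (s : Set X) (x : X) : EReal := (f x : EReal) + extE g s x

/-- The strongly convex model `Θ_k` with base point `xk` and metric `G`, evaluated at `z`. -/
def Theta (f g : X → ℝ) (fgrad : X → X) (G : X →L[ℝ] X) (xk z : X) : ℝ :=
  f xk + ⟪fgrad xk, z - xk⟫ + (1/2) * ⟪z - xk, G (z - xk)⟫ + g z

/-- `p` is the proximal point `prox^D_{γ g}(u)`, i.e. the minimizer over `dom g` of
`z ↦ (1/(2γ)) ⟪ z - u, D (z - u) ⟫ + g z`. -/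
def IsProxPt (γ : ℝ) (D : X →L[ℝ] X) (g : X → ℝ) (s : Set X) (u p : X) : Prop :=
  p ∈ s ∧ ∀ z ∈ s,
    (1 / (2 * γ)) * ⟪p - u, D (p - u)⟫ + g p ≤
      (1 / (2 * γ)) * ⟪z - u, D (z - u)⟫ + g z

lemma key_min {s : Set X} {g : X → ℝ} (hg : ConvexOn ℝ s g)
    (φ : X → ℝ) {p : X} (q : X) (hp : p ∈ s) (hq : q ∈ s) (c : ℝ)
    (hφ : ∀ t : ℝ, t ∈ Set.Ioo (0:ℝ) 1 →
      φ ((1-t)•p + t•q) ≤ (1-t)*φ p + t*φ q - t*(1-t)*c)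
    (hmin : ∀ z ∈ s, φ p + g p ≤ φ z + g z) :
    φ p + g p + c ≤ φ q + g q := by
  have h : ∀ t ∈ Set.Ioo (0:ℝ) 1, φ p + g p + (1-t)*c ≤ φ q + g q := by
    intro t ht
    obtain ⟨ht0, ht1⟩ := ht
    have h1t : (0:ℝ) ≤ 1 - t := by linarith
    have hz : (1-t)•p + t•q ∈ s := hg.1 hp hq h1t ht0.le (by ring)
    have h1 := hmin _ hz
    have h2 := hg.2 hp hq h1t ht0.le (show (1-t)+t = 1 by ring)
    simp only [smul_eq_mul] at h2
    have h3 := hφ t ⟨ht0, ht1⟩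
    nlinarith [ht0]
  have htend : Tendsto (fun t : ℝ => φ p + g p + (1-t)*c) (𝓝[>] (0:ℝ))
      (𝓝 (φ p + g p + c)) := by
    have hc : ContinuousAt (fun t : ℝ => φ p + g p + (1-t)*c) 0 := by fun_prop
    have h2 := hc.tendsto.mono_left (nhdsWithin_le_nhds (s := Set.Ioi (0:ℝ)))
    simpa using h2
  refine le_of_tendsto htend ?_
  filter_upwards [Ioo_mem_nhdsGT_of_mem (by simp : (0:ℝ) ∈ Set.Ico (0:ℝ) 1)] with t ht
  exact h t ht

lemma comb_sq (a b : X) (t : ℝ) :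
    ⟪(1-t)•a + t•b, (1-t)•a + t•b⟫ =
      (1-t)*⟪a,a⟫ + t*⟪b,b⟫ - t*(1-t)*⟪b-a,b-a⟫ := by
  simp only [inner_add_add_self, inner_sub_sub_self, real_inner_smul_left, real_inner_smul_right,
    real_inner_comm b a]
  ring

lemma comb_sub (p q u : X) (t : ℝ) :
    ((1-t)•p + t•q) - u = (1-t)•(p-u) + t•(q-u) := by
  module

lemma prox_strong {s : Set X} {g : X → ℝ} (hg : ConvexOn ℝ s g) {u p : X}
    (hp : IsProxPt 1 (ContinuousLinearMap.id ℝ X) g s u p) :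
    ∀ q ∈ s, (1/2)*⟪p-u, p-u⟫ + g p + (1/2)*⟪q-p, q-p⟫ ≤ (1/2)*⟪q-u,q-u⟫ + g q := by
  intro q hq
  have hmin' : ∀ z ∈ s, (1/2)*⟪p-u,p-u⟫ + g p ≤ (1/2)*⟪z-u,z-u⟫ + g z := by
    intro z hz
    have := hp.2 z hz
    norm_num [ContinuousLinearMap.id_apply] at this
    simp only [real_inner_self_eq_norm_sq]
    linarith
  have key := key_min hg (fun z => (1/2)*⟪z-u, z-u⟫) q hp.1 hq ((1/2)*⟪q-p,q-p⟫)
    (fun t ht => by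
      beta_reduce
      rw [comb_sub, comb_sq]
      have : (q-u) - (p-u) = q - p := by abel
      rw [this]; ring_nf; exact le_refl _)
    hmin'
  simpa using key

lemma prox_dist {s : Set X} {g : X → ℝ} (hg : ConvexOn ℝ s g) {u v p q : X}
    (hp : IsProxPt 1 (ContinuousLinearMap.id ℝ X) g s u p)
    (hq : IsProxPt 1 (ContinuousLinearMap.id ℝ X) g s v q) :
    ‖p - q‖ ≤ ‖u - v‖ := by
  have A := prox_strong hg hp q hq.1
  have B := prox_strong hg hq p hp.1
  have hpqflip : ⟪p-q, p-q⟫ = ⟪q-p, q-p⟫ := by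
    rw [show p - q = -(q-p) by abel, inner_neg_neg]
  have key : ⟪q-u,q-u⟫ - ⟪p-u,p-u⟫ + ⟪p-v,p-v⟫ - ⟪q-v,q-v⟫ = 2*⟪q-p, v-u⟫ := by
    simp only [inner_sub_left, inner_sub_right, real_inner_comm u q, real_inner_comm u p,
      real_inner_comm v p, real_inner_comm v q, real_inner_comm p q]
    ring
  have hs : ⟪q-p, q-p⟫ ≤ ⟪q-p, v-u⟫ := by linarith
  have h1 : ‖q-p‖^2 ≤ ‖q-p‖*‖v-u‖ := by
    have h2 := real_inner_le_norm (q-p) (v-u)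
    rw [real_inner_self_eq_norm_sq] at hs
    linarith
  rw [norm_sub_rev p q, norm_sub_rev u v]
  rcases eq_or_lt_of_le (norm_nonneg (q-p)) with h0 | h0
  · rw [← h0]; exact norm_nonneg _
  · have := le_of_mul_le_mul_right (by nlinarith : ‖q-p‖*‖q-p‖ ≤ ‖v-u‖*‖q-p‖) h0
    exact this

/-- bound on the KKT residual `r(x^k)`. -/
theorem residual_kkt_bound
    (f g : X → ℝ) (domg O : Set X) (fgrad : X → X)
    (hdom : domg.Nonempty) (hO : IsOpen O) (hclO : closure domg ⊆ O)
    (hgconv : ConvexOn ℝ domg g) (hgcont : ContinuousOn g domg)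
    (hglsc : LowerSemicontinuous (extE g domg))
    (hflsc : LowerSemicontinuous f)
    (hfC2 : ContDiffOn ℝ 2 f O)
    (hfgrad : ∀ z ∈ O, HasGradientAt f (fgrad z) z)
    (hFlb : ∃ c : ℝ, ∀ z ∈ domg, c ≤ f z + g z)
    (μ σ β : ℝ) (hμ : 0 < μ) (hβ : 0 < β ∧ β < 1) (hσ : 0 < σ ∧ σ < (1/2) * min 1 μ)
    (eps : ℕ → ℝ) (heps : ∀ k, 0 < eps k) (hepsbd : ∃ C : ℝ, ∀ k, eps k ≤ C)
    (kbar : ℕ) (hkbar : ∀ k, kbar ≤ k → eps k ≤ μ / 10)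
    (x y xbar : ℕ → X) (G : ℕ → X →L[ℝ] X) (m : ℕ → ℕ)
    (hx0 : x 0 ∈ domg)
    (hGsa : ∀ k, ∀ u v : X, ⟪G k u, v⟫ = ⟪u, G k v⟫)
    (hGlb : ∀ k, ∀ u : X, μ * ‖u‖ ^ 2 ≤ ⟪u, G k u⟫)
    (hxbar : ∀ k, xbar k ∈ domg ∧ ∀ z ∈ domg,
      Theta f g fgrad (G k) (x k) (xbar k) ≤ Theta f g fgrad (G k) (x k) z)
    (hy : ∀ k, y k ∈ domg ∧
      Theta f g fgrad (G k) (x k) (y k) < Theta f g fgrad (G k) (x k) (x k) ∧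
      Theta f g fgrad (G k) (x k) (y k) - Theta f g fgrad (G k) (x k) (xbar k)
        ≤ eps k * ‖y k - x k‖ ^ 2)
    (hls : ∀ k,
      (FE f g domg (x k + β ^ (m k) • (y k - x k))
        ≤ ((f (x k) + g (x k) - σ * β ^ (m k) * ‖y k - x k‖ ^ 2 : ℝ) : EReal)) ∧
      ∀ j < m k, ¬ (FE f g domg (x k + β ^ j • (y k - x k))
        ≤ ((f (x k) + g (x k) - σ * β ^ j * ‖y k - x k‖ ^ 2 : ℝ) : EReal)))
    (hupd : ∀ k,
      (FE f g domg (y k) < FE f g domg (x k + β ^ (m k) • (y k - x k)) ∧ x (k+1) = y k) ∨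
      ((¬ FE f g domg (y k) < FE f g domg (x k + β ^ (m k) • (y k - x k))) ∧
        x (k+1) = x k + β ^ (m k) • (y k - x k)))
    (prox1 : X → X)
    (hprox1 : ∀ u : X, IsProxPt 1 (ContinuousLinearMap.id ℝ X) g domg u (prox1 u)) :
    ∀ k : ℕ,
      ‖x k - prox1 (x k - fgrad (x k))‖ ≤
        (2 + ‖G k‖) * (1 + Real.sqrt 2 * (Real.sqrt μ)⁻¹ * Real.sqrt (eps k)) * ‖y k - x k‖ := by
  intro k
  obtain ⟨hxbmem, hxbmin⟩ := hxbar k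
  obtain ⟨hymem, -, hyineq⟩ := hy k
  have hcross : ∀ a b : X, ⟪a, G k b⟫ = ⟪b, G k a⟫ := by
    intro a b
    rw [real_inner_comm (G k b) a]
    exact hGsa k b a
  set φ : X → ℝ := fun z => ⟪fgrad (x k), z - x k⟫ + (1/2)*⟪z - x k, G k (z - x k)⟫ with hφdef
  clear_value φ
  have hφcomb : ∀ p q : X, ∀ t : ℝ,
      φ ((1-t)•p + t•q) = (1-t)*φ p + t*φ q - t*(1-t)*((1/2)*⟪q-p, G k (q-p)⟫) := by
    intro p q t
    simp only [hφdef]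
    rw [comb_sub]
    have hqp : q - p = (q - x k) - (p - x k) := by abel
    rw [hqp]
    set a := p - x k with ha
    set b := q - x k with hb
    clear_value a b
    simp only [inner_add_left, inner_add_right, inner_sub_left, inner_sub_right,
      real_inner_smul_left, real_inner_smul_right, map_add, map_smul, map_sub]
    ring
  have hθmin : ∀ z ∈ domg, φ (xbar k) + g (xbar k) ≤ φ z + g z := by
    intro z hz
    have h := hxbmin z hz
    simp only [Theta] at h
    simp only [hφdef]
    linarith
  have hkey : ∀ q ∈ domg,
      φ (xbar k) + g (xbar k) + (1/2)*⟪q - xbar k, G k (q - xbar k)⟫ ≤ φ q + g q := by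
    intro q hq
    exact key_min hgconv φ q hxbmem hq _ (fun t _ => le_of_eq (hφcomb (xbar k) q t)) hθmin
  set w : X := fgrad (x k) + G k (xbar k - x k) with hwdef
  have hexp : ∀ z : X,
      φ z = φ (xbar k) + ⟪z - xbar k, w⟫ + (1/2)*⟪z - xbar k, G k (z - xbar k)⟫ := by
    intro z
    simp only [hφdef, hwdef]
    have hz : z - x k = (z - xbar k) + (xbar k - x k) := by abel
    rw [hz]
    simp only [inner_add_right, inner_add_left, map_add]
    have h1 := hcross (xbar k - x k) (z - xbar k)
    linear_combination (1/2) * h1 + real_inner_comm (z - xbar k) (fgrad (x k))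
  clear_value w
  have hVI : ∀ z ∈ domg, 0 ≤ ⟪z - xbar k, w⟫ + g z - g (xbar k) := by
    intro z hz
    have h := hkey z hz
    rw [hexp z] at h
    linarith
  -- strong convexity bound
  have hsc : μ/2 * ‖y k - xbar k‖^2 ≤ eps k * ‖y k - x k‖^2 := by
    have h1 := hkey (y k) hymem
    have h2 := hGlb k (y k - xbar k)
    have h3 : φ (y k) + g (y k) - (φ (xbar k) + g (xbar k)) ≤ eps k * ‖y k - x k‖^2 := by
      simp only [Theta] at hyineq
      simp only [hφdef]
      linarith
    linarith
  -- distance bound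
  set c : ℝ := Real.sqrt 2 * (Real.sqrt μ)⁻¹ * Real.sqrt (eps k) with hcdef
  have hcnn : 0 ≤ c := by rw [hcdef]; positivity
  have hdb : ‖y k - xbar k‖ ≤ c * ‖y k - x k‖ := by
    have hε0 : (0:ℝ) ≤ eps k := (heps k).le
    have hμi : (0:ℝ) < μ⁻¹ := by positivity
    have hsq : ‖y k - xbar k‖^2 ≤ 2 * μ⁻¹ * eps k * ‖y k - x k‖^2 := by
      have hinv : μ⁻¹ * μ = 1 := inv_mul_cancel₀ (ne_of_gt hμ)
      nlinarith [hsc]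
    have h1 : ‖y k - xbar k‖ = Real.sqrt (‖y k - xbar k‖^2) :=
      (Real.sqrt_sq (norm_nonneg _)).symm
    have h2 : c * ‖y k - x k‖ = Real.sqrt (2 * μ⁻¹ * eps k * ‖y k - x k‖^2) := by
      rw [hcdef,
        Real.sqrt_mul (mul_nonneg (mul_nonneg (by norm_num) hμi.le) hε0) (‖y k - x k‖^2),
        Real.sqrt_mul (mul_nonneg (by norm_num) hμi.le) (eps k),
        Real.sqrt_mul (by norm_num : (0:ℝ) ≤ 2) μ⁻¹, Real.sqrt_inv,
        Real.sqrt_sq (norm_nonneg _)]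
      try ring
    rw [h1, h2]
    exact Real.sqrt_le_sqrt hsq
  clear_value c
  -- xbar k is the prox point at u1
  set u1 : X := xbar k - w with hu1def
  clear_value u1
  have hxbprox : IsProxPt 1 (ContinuousLinearMap.id ℝ X) g domg u1 (xbar k) := by
    refine ⟨hxbmem, ?_⟩
    intro z hz
    simp only [ContinuousLinearMap.id_apply]
    have hweq : xbar k - u1 = w := by rw [hu1def]; abel
    have hz1 : z - u1 = (z - xbar k) + (xbar k - u1) := by abel
    rw [hz1, hweq, inner_add_add_self (𝕜 := ℝ) (z - xbar k) w]
    have h1 := hVI z hz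
    have h2 := real_inner_self_nonneg (x := z - xbar k)
    have h4 := real_inner_comm w (z - xbar k)
    have h3 : (1:ℝ)/(2*1) = 1/2 := by norm_num
    rw [h3]
    linarith
  have hxbeq : xbar k = prox1 u1 := by
    have A := prox_strong hgconv hxbprox (prox1 u1) (hprox1 u1).1
    have B := prox_strong hgconv (hprox1 u1) (xbar k) hxbmem
    have hflip : ⟪xbar k - prox1 u1, xbar k - prox1 u1⟫
        = ⟪prox1 u1 - xbar k, prox1 u1 - xbar k⟫ := by
      rw [show xbar k - prox1 u1 = -(prox1 u1 - xbar k) by abel, inner_neg_neg]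
    have hnp : ⟪xbar k - prox1 u1, xbar k - prox1 u1⟫ ≤ 0 := by linarith
    exact (sub_eq_zero.mp (real_inner_self_nonpos.mp hnp))
  -- assembling
  have tri1 : ‖x k - prox1 (x k - fgrad (x k))‖
      ≤ ‖x k - xbar k‖ + ‖xbar k - prox1 (x k - fgrad (x k))‖ := by
    have := dist_triangle (x k) (xbar k) (prox1 (x k - fgrad (x k)))
    simpa [dist_eq_norm] using this
  have hne : ‖xbar k - prox1 (x k - fgrad (x k))‖ ≤ ‖u1 - (x k - fgrad (x k))‖ := by
    rw [hxbeq]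
    exact prox_dist hgconv (hprox1 u1) (hprox1 (x k - fgrad (x k)))
  have hu1e : u1 - (x k - fgrad (x k)) = (xbar k - x k) - G k (xbar k - x k) := by
    rw [hu1def, hwdef]; abel
  have hne2 : ‖u1 - (x k - fgrad (x k))‖ ≤ (1 + ‖G k‖) * ‖xbar k - x k‖ := by
    rw [hu1e]
    calc ‖(xbar k - x k) - G k (xbar k - x k)‖
        ≤ ‖xbar k - x k‖ + ‖G k (xbar k - x k)‖ := norm_sub_le _ _
    _ ≤ ‖xbar k - x k‖ + ‖G k‖ * ‖xbar k - x k‖ := by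
        linarith [(G k).le_opNorm (xbar k - x k)]
    _ = (1 + ‖G k‖) * ‖xbar k - x k‖ := by ring
  have hbx : ‖xbar k - x k‖ ≤ (1 + c) * ‖y k - x k‖ := by
    calc ‖xbar k - x k‖ ≤ ‖xbar k - y k‖ + ‖y k - x k‖ := by
          have := dist_triangle (xbar k) (y k) (x k)
          simpa [dist_eq_norm] using this
    _ ≤ c * ‖y k - x k‖ + ‖y k - x k‖ := by
          rw [norm_sub_rev (xbar k) (y k)]; linarith
    _ = (1 + c) * ‖y k - x k‖ := by ring
  have hxkxb : ‖x k - xbar k‖ = ‖xbar k - x k‖ := norm_sub_rev _ _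
  have hGnn : (0:ℝ) ≤ ‖G k‖ := norm_nonneg _
  have hdnn : (0:ℝ) ≤ ‖y k - x k‖ := norm_nonneg _
  have hxbnn : (0:ℝ) ≤ ‖xbar k - x k‖ := norm_nonneg _
  calc ‖x k - prox1 (x k - fgrad (x k))‖
      ≤ ‖x k - xbar k‖ + ‖xbar k - prox1 (x k - fgrad (x k))‖ := tri1
  _ ≤ ‖xbar k - x k‖ + (1 + ‖G k‖) * ‖xbar k - x k‖ := by rw [hxkxb]; linarith
  _ = (2 + ‖G k‖) * ‖xbar k - x k‖ := by ring
  _ ≤ (2 + ‖G k‖) * ((1 + c) * ‖y k - x k‖) := by nlinarith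
  _ = (2 + ‖G k‖) * (1 + c) * ‖y k - x k‖ := by ring
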